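/- Let A be an n×n Hermitian complex matrix, V ⊆ ℂ^n a k-dimensional subspace, and Q(t) the matrix of the orthogonal projection of ℂ^n onto exp(−tA)·V. Then for every t ∈ ℝ, d/dt Re Tr(A Q(t)) = −‖A Q(t) − Q(t) A‖_F² ≤ 0, where ‖M‖_F² = Re Tr(M Mᴴ) is the squared Frobenius norm; in particular the derivative vanishes at t if and only if A Q(t) = Q(t) A. -/

import Mathlib

open Matrix

/-! Write `P = Q t`. Hermitian idempotents are determined by their ranges, so `Q (t + s)` is
given by the explicit formula `E P (P Eᴴ E P + 1 - P)⁻¹ P Eᴴ` with `E = exp (-s A)`, which is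
differentiable in `s`. At `s = 0` it has derivative `[P, [A, P]]` (Brockett's double bracket
flow), and `Tr (A [P, [A, P]]) = Tr (C C) = -Tr (C Cᴴ)` for the skew-Hermitian `C = [A, P]`. -/

namespace Matrix

variable {m R 𝕜 : Type*} [Fintype m]

section StarProjection

variable [CommSemiring R]

theorem mulVec_eq_self_of_mem_range {P : Matrix m m R} (hP : IsIdempotentElem P)
    {x : m → R} (hx : x ∈ LinearMap.range P.mulVecLin) : P *ᵥ x = x := by
  obtain ⟨y, rfl⟩ := hx
  rw [mulVecLin_apply, mulVec_mulVec, hP.eq]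

theorem mul_eq_right_of_range_le {P Q : Matrix m m R} (hP : IsIdempotentElem P)
    (h : LinearMap.range Q.mulVecLin ≤ LinearMap.range P.mulVecLin) : P * Q = Q :=
  ext_iff_mulVec.mpr fun x => by
    rw [← mulVec_mulVec]
    exact mulVec_eq_self_of_mem_range hP (h ⟨x, rfl⟩)

theorem eq_of_isStarProjection_of_range_eq [StarRing R] {P Q : Matrix m m R}
    (hP : IsStarProjection P) (hQ : IsStarProjection Q)
    (h : LinearMap.range P.mulVecLin = LinearMap.range Q.mulVecLin) : P = Q := by
  have hPh : Pᴴ = P := hP.isSelfAdjoint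
  have hQh : Qᴴ = Q := hQ.isSelfAdjoint
  calc P = (Q * P)ᴴ := by rw [mul_eq_right_of_range_le hQ.isIdempotentElem h.le, hPh]
    _ = P * Q := by rw [conjTranspose_mul, hPh, hQh]
    _ = Q := mul_eq_right_of_range_le hP.isIdempotentElem h.ge

end StarProjection

section ProjImage

variable [DecidableEq m] [RCLike 𝕜]

/-- Padding the Gram matrix `P Eᴴ E P` by `1 - P` makes it invertible; its inverse then plays
the role of the pseudo-inverse in the classical formula `projImage` for the orthogonal projection
onto `E · range P`. -/
noncomputable def paddedGram (E P : Matrix m m 𝕜) : Matrix m m 𝕜 :=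
  P * (Eᴴ * E) * P + (1 - P)

noncomputable def projImage (E P : Matrix m m 𝕜) : Matrix m m 𝕜 :=
  E * P * (paddedGram E P)⁻¹ * P * Eᴴ

variable {E P : Matrix m m 𝕜}

theorem paddedGram_mul_self (hP : IsIdempotentElem P) :
    paddedGram E P * P = P * (Eᴴ * E) * P := by
  rw [paddedGram, add_mul, mul_assoc _ P P, hP.eq, sub_mul, one_mul, hP.eq, sub_self, add_zero]

theorem isHermitian_paddedGram (hP : IsSelfAdjoint P) : (paddedGram E P).IsHermitian := by
  have hPh : Pᴴ = P := hP
  simp only [IsHermitian, paddedGram, conjTranspose_add, conjTranspose_sub, conjTranspose_mul,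
    conjTranspose_one, conjTranspose_conjTranspose, hPh, mul_assoc]

open scoped ComplexOrder in
theorem isUnit_paddedGram (hE : IsUnit E) (hP : IsStarProjection P) :
    IsUnit (paddedGram E P) := by
  have hPh : Pᴴ = P := hP.isSelfAdjoint
  have hQh : (1 - P)ᴴ = 1 - P := hP.one_sub.isSelfAdjoint
  have hsum : paddedGram E P = (E * P)ᴴ * (E * P) + (1 - P)ᴴ * (1 - P) := by
    rw [hQh, hP.one_sub.isIdempotentElem.eq, conjTranspose_mul, hPh, paddedGram]
    simp only [mul_assoc]
  have hquad : ∀ (B : Matrix m m 𝕜) (v : m → 𝕜),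
      star v ⬝ᵥ ((Bᴴ * B) *ᵥ v) = star (B *ᵥ v) ⬝ᵥ (B *ᵥ v) := fun B v => by
    rw [← mulVec_mulVec, dotProduct_mulVec, ← star_mulVec]
  rw [← mulVec_injective_iff_isUnit]
  refine (injective_iff_map_eq_zero (paddedGram E P).mulVecLin).mpr fun z hz => ?_
  have h0 : star z ⬝ᵥ (paddedGram E P *ᵥ z) = 0 := by
    rw [← mulVecLin_apply, hz, dotProduct_zero]
  rw [hsum, add_mulVec, dotProduct_add, hquad, hquad] at h0
  obtain ⟨hEP, hQ⟩ := (add_eq_zero_iff_of_nonneg (dotProduct_star_self_nonneg _)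
    (dotProduct_star_self_nonneg _)).mp h0
  have hPz : P *ᵥ z = z := by
    rw [dotProduct_star_self_eq_zero, sub_mulVec, one_mulVec, sub_eq_zero] at hQ
    exact hQ.symm
  rw [dotProduct_star_self_eq_zero, ← mulVec_mulVec, hPz] at hEP
  exact mulVec_injective_iff_isUnit.mpr hE (hEP.trans (mulVec_zero E).symm)

theorem mul_inv_paddedGram_mul_gram (hE : IsUnit E) (hP : IsStarProjection P) :
    P * (paddedGram E P)⁻¹ * (P * (Eᴴ * E) * P) = P := by
  have hS := (isUnit_iff_isUnit_det _).mp (isUnit_paddedGram hE hP)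
  rw [← paddedGram_mul_self hP.isIdempotentElem, ← mul_assoc, mul_assoc P,
    nonsing_inv_mul _ hS, mul_one, hP.isIdempotentElem.eq]

theorem projImage_mul_mul_self (hE : IsUnit E) (hP : IsStarProjection P) :
    projImage E P * (E * P) = E * P := by
  calc projImage E P * (E * P) = E * (P * (paddedGram E P)⁻¹ * (P * (Eᴴ * E) * P)) := by
        simp only [projImage, mul_assoc]
    _ = E * P := by rw [mul_inv_paddedGram_mul_gram hE hP]

theorem isStarProjection_projImage (hE : IsUnit E) (hP : IsStarProjection P) :
    IsStarProjection (projImage E P) := by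
  have hPh : Pᴴ = P := hP.isSelfAdjoint
  refine ⟨?_, ?_⟩
  · calc projImage E P * projImage E P
        = projImage E P * (E * P) * ((paddedGram E P)⁻¹ * P * Eᴴ) := by
          simp only [projImage, mul_assoc]
      _ = projImage E P := by
          rw [projImage_mul_mul_self hE hP, projImage]
          simp only [mul_assoc]
  · show (projImage E P)ᴴ = projImage E P
    rw [projImage, conjTranspose_mul, conjTranspose_mul, conjTranspose_mul, conjTranspose_mul,
      conjTranspose_conjTranspose, conjTranspose_nonsing_inv,
      (isHermitian_paddedGram hP.isSelfAdjoint).eq, hPh]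
    simp only [mul_assoc]

theorem range_projImage (hE : IsUnit E) (hP : IsStarProjection P) :
    LinearMap.range (projImage E P).mulVecLin =
      (LinearMap.range P.mulVecLin).map E.mulVecLin := by
  apply le_antisymm
  · rintro _ ⟨x, rfl⟩
    refine ⟨P *ᵥ (((paddedGram E P)⁻¹ * P * Eᴴ) *ᵥ x), ⟨_, rfl⟩, ?_⟩
    simp only [mulVecLin_apply, mulVec_mulVec, projImage, mul_assoc]
  · rintro _ ⟨v, hv, rfl⟩
    have hPv : P *ᵥ v = v := mulVec_eq_self_of_mem_range hP.isIdempotentElem hv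
    refine ⟨E *ᵥ v, ?_⟩
    rw [mulVecLin_apply, mulVecLin_apply, ← hPv, mulVec_mulVec, mulVec_mulVec, mul_assoc,
      projImage_mul_mul_self hE hP, mulVec_mulVec]

end ProjImage

section Deriv

/- The statements use the product topology on matrices; the proofs open the operator norm, which
induces the same topology and makes matrices a normed algebra. -/

variable [RCLike 𝕜]

theorem _root_.HasDerivAt.matrix_conjTranspose {E : ℝ → Matrix m m 𝕜} {D : Matrix m m 𝕜}
    {t : ℝ} (hE : HasDerivAt E D t) : HasDerivAt (fun s => (E s)ᴴ) Dᴴ t :=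
  open scoped Norms.Operator in
  (conjTransposeLinearEquiv m m ℝ 𝕜).toLinearMap.toContinuousLinearMap.hasFDerivAt.comp_hasDerivAt
    t hE

theorem _root_.HasDerivAt.re_trace_mul {f : ℝ → Matrix m m 𝕜} {f' : Matrix m m 𝕜} {t : ℝ}
    (hf : HasDerivAt f f' t) (A : Matrix m m 𝕜) :
    HasDerivAt (fun s => RCLike.re (trace (A * f s))) (RCLike.re (trace (A * f'))) t := by
  classical
  open scoped Norms.Operator in
  exact (RCLike.reCLM.comp (traceLinearMap m ℝ 𝕜).toContinuousLinearMap).hasFDerivAt.comp_hasDerivAt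
    t (hf.const_mul A)

variable [DecidableEq m]

theorem _root_.HasDerivAt.matrix_inv {S : ℝ → Matrix m m 𝕜} {S' : Matrix m m 𝕜} {t : ℝ}
    (hS : HasDerivAt S S' t) (ht : IsUnit (S t)) :
    HasDerivAt (fun s => (S s)⁻¹) (-((S t)⁻¹ * S' * (S t)⁻¹)) t := by
  open scoped Norms.Operator in
  have h := (hasFDerivAt_ringInverse (𝕜 := ℝ) ht.unit).comp_hasDerivAt t hS
  simp only [Function.comp_def, ← nonsing_inv_eq_ringInverse, coe_units_inv,
    IsUnit.unit_spec] at h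
  exact h

theorem hasDerivAt_projImage {E : ℝ → Matrix m m 𝕜} {D P : Matrix m m 𝕜} {t : ℝ}
    (hE : HasDerivAt E D t) (hEt : E t = 1) (hP : IsIdempotentElem P) :
    HasDerivAt (fun s => projImage (E s) P) (D * P + P * Dᴴ - P * (D + Dᴴ) * P) t := by
  open scoped Norms.Operator in
  have hSt : paddedGram (E t) P = 1 := by
    rw [paddedGram, hEt, conjTranspose_one, one_mul, mul_one, hP.eq, add_sub_cancel]
  have hEh := hE.matrix_conjTranspose
  have hS : HasDerivAt (fun s => paddedGram (E s) P) (P * (Dᴴ + D) * P) t := by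
    have h := (((hEh.mul hE).const_mul P).mul_const P).add_const (1 - P)
    simp only [hEt, conjTranspose_one, mul_one, one_mul] at h
    exact h
  have hT := hS.matrix_inv (hSt ▸ isUnit_one)
  rw [hSt, inv_one, one_mul, mul_one] at hT
  refine ((((hE.mul_const P).mul hT).mul_const P).mul hEh).congr_deriv ?_
  simp only [Pi.mul_apply, hSt, inv_one]
  simp only [hEt, conjTranspose_one, mul_one, one_mul, mul_add, add_mul, mul_neg, neg_mul,
    mul_assoc, hP.eq, hP.mul_self_mul]
  abel

theorem exp_smul_mul_exp_smul (A : Matrix m m 𝕜) (a b : ℝ) :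
    NormedSpace.exp (a • A) * NormedSpace.exp (b • A) = NormedSpace.exp ((a + b) • A) := by
  rw [add_smul, exp_add_of_commute _ _ (((Commute.refl A).smul_left a).smul_right b)]

theorem hasDerivAt_exp_sub_smul (A : Matrix m m 𝕜) (t : ℝ) :
    HasDerivAt (fun s : ℝ => NormedSpace.exp ((t - s) • A)) (-A) t := by
  open scoped Norms.Operator in
  have h := (hasDerivAt_exp_smul_const (𝕂 := ℝ) A (t - t)).scomp t
    ((hasDerivAt_id t).const_sub t)
  rw [sub_self, zero_smul, NormedSpace.exp_zero, one_mul, neg_one_smul] at h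
  exact h

theorem hasDerivAt_projImage_exp {A P : Matrix m m 𝕜} (hA : A.IsHermitian)
    (hP : IsIdempotentElem P) (t : ℝ) :
    HasDerivAt (fun s : ℝ => projImage (NormedSpace.exp ((t - s) • A)) P)
      (P * (A * P - P * A) - (A * P - P * A) * P) t := by
  convert hasDerivAt_projImage (hasDerivAt_exp_sub_smul A t) (by simp) hP using 1
  rw [conjTranspose_neg, hA.eq]
  simp only [mul_add, add_mul, mul_sub, sub_mul, mul_neg, neg_mul, mul_assoc, hP.eq,
    hP.mul_self_mul]
  abel

end Deriv

section Trace

theorem trace_mul_commutator_commutator [CommRing R] (A P : Matrix m m R) :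
    trace (A * (P * (A * P - P * A) - (A * P - P * A) * P)) =
      trace ((A * P - P * A) * (A * P - P * A)) := by
  set C := A * P - P * A
  calc trace (A * (P * C - C * P)) = trace (A * P * C) - trace (A * C * P) := by
        rw [mul_sub, trace_sub, mul_assoc, mul_assoc]
    _ = trace (C * (A * P)) - trace (C * (P * A)) := by
        rw [trace_mul_comm (A * P), trace_mul_cycle, trace_mul_comm (P * A)]
    _ = trace (C * C) := by rw [← trace_sub, ← mul_sub]

theorem conjTranspose_commutator [CommRing R] [StarRing R] {A P : Matrix m m R}
    (hA : A.IsHermitian) (hP : P.IsHermitian) : (A * P - P * A)ᴴ = -(A * P - P * A) := by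
  rw [conjTranspose_sub, conjTranspose_mul, conjTranspose_mul, hA.eq, hP.eq, neg_sub]

variable [RCLike 𝕜] {n : Type*} [Fintype n]

open scoped ComplexOrder in
theorem re_trace_mul_conjTranspose_self_nonneg (B : Matrix m n 𝕜) :
    0 ≤ RCLike.re (trace (B * Bᴴ)) :=
  (RCLike.nonneg_iff.mp (posSemidef_self_mul_conjTranspose B).trace_nonneg).1

open scoped ComplexOrder in
theorem re_trace_mul_conjTranspose_self_eq_zero_iff (B : Matrix m n 𝕜) :
    RCLike.re (trace (B * Bᴴ)) = 0 ↔ B = 0 := by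
  have him := (RCLike.nonneg_iff.mp (posSemidef_self_mul_conjTranspose B).trace_nonneg).2
  rw [← trace_mul_conjTranspose_self_eq_zero_iff]
  exact ⟨fun h => RCLike.ext (by simp [h]) (by simp [him]), fun h => by simp [h]⟩

end Trace

end Matrix

theorem stmt6_general (n : ℕ) (A : Matrix (Fin n) (Fin n) ℂ) (hA : A.IsHermitian)
    (V : Submodule ℂ (Fin n → ℂ))
    (Q : ℝ → Matrix (Fin n) (Fin n) ℂ)
    (hQidem : ∀ t, Q t * Q t = Q t) (hQherm : ∀ t, (Q t)ᴴ = Q t)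
    (hQrange : ∀ t : ℝ, LinearMap.range (Q t).mulVecLin =
      V.map (NormedSpace.exp ((-t : ℂ) • A)).mulVecLin) :
    ∀ t : ℝ,
      HasDerivAt (fun s => (Matrix.trace (A * Q s)).re)
        (-(Matrix.trace ((A * Q t - Q t * A) * (A * Q t - Q t * A)ᴴ)).re) t ∧
      (-(Matrix.trace ((A * Q t - Q t * A) * (A * Q t - Q t * A)ᴴ)).re ≤ 0) ∧
      ((-(Matrix.trace ((A * Q t - Q t * A) * (A * Q t - Q t * A)ᴴ)).re = 0) ↔
        A * Q t = Q t * A) := by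
  intro t
  have hQ : ∀ s, IsStarProjection (Q s) := fun s => ⟨hQidem s, hQherm s⟩
  have hrange : ∀ s : ℝ, LinearMap.range (Q s).mulVecLin =
      V.map (NormedSpace.exp ((-s) • A)).mulVecLin := fun s => by
    rw [hQrange, ← Complex.ofReal_neg, Complex.coe_smul]
  have hflow : ∀ s, Q s = projImage (NormedSpace.exp ((t - s) • A)) (Q t) := fun s => by
    have hE : IsUnit (NormedSpace.exp ((t - s) • A)) := isUnit_exp _
    refine eq_of_isStarProjection_of_range_eq (hQ s) (isStarProjection_projImage hE (hQ t)) ?_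
    rw [range_projImage hE (hQ t), hrange, hrange, ← Submodule.map_comp, ← mulVecLin_mul,
      exp_smul_mul_exp_smul, sub_add_eq_add_sub, add_neg_cancel, zero_sub]
  have hderiv := (hasDerivAt_projImage_exp hA (hQ t).isIdempotentElem t).re_trace_mul A
  simp only [← hflow, trace_mul_commutator_commutator, RCLike.re_to_complex] at hderiv
  have hsq : (A * Q t - Q t * A) * (A * Q t - Q t * A) =
      -((A * Q t - Q t * A) * (A * Q t - Q t * A)ᴴ) := by
    rw [conjTranspose_commutator hA (hQ t).isSelfAdjoint, mul_neg, neg_neg]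
  rw [hsq, trace_neg, Complex.neg_re] at hderiv
  refine ⟨hderiv, neg_nonpos.mpr (re_trace_mul_conjTranspose_self_nonneg (A * Q t - Q t * A)), ?_⟩
  rw [neg_eq_zero, ← RCLike.re_to_complex, re_trace_mul_conjTranspose_self_eq_zero_iff,
    sub_eq_zero]

/-- Along the flow `V ↦ exp(−tA)·V`, with `Q t` the matrix of the orthogonal
projection onto `exp(−tA)·V` (characterized as the Hermitian idempotent matrix
with column space `exp(−tA)·V`), the function `t ↦ Re Tr(A Q(t))` has derivative
`−‖A Q(t) − Q(t) A‖_F² ≤ 0`, where `‖M‖_F² = Re Tr(M Mᴴ)`; the derivative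
vanishes at `t` iff `A Q(t) = Q(t) A`. -/
theorem stmt6 (n k : ℕ) (A : Matrix (Fin n) (Fin n) ℂ) (hA : A.IsHermitian)
    (V : Submodule ℂ (Fin n → ℂ)) (hV : Module.finrank ℂ V = k)
    (Q : ℝ → Matrix (Fin n) (Fin n) ℂ)
    (hQidem : ∀ t, Q t * Q t = Q t) (hQherm : ∀ t, (Q t)ᴴ = Q t)
    (hQrange : ∀ t : ℝ, LinearMap.range (Q t).mulVecLin =
      V.map (NormedSpace.exp ((-t : ℂ) • A)).mulVecLin) :
    ∀ t : ℝ,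
      HasDerivAt (fun s => (Matrix.trace (A * Q s)).re)
        (-(Matrix.trace ((A * Q t - Q t * A) * (A * Q t - Q t * A)ᴴ)).re) t ∧
      (-(Matrix.trace ((A * Q t - Q t * A) * (A * Q t - Q t * A)ᴴ)).re ≤ 0) ∧
      ((-(Matrix.trace ((A * Q t - Q t * A) * (A * Q t - Q t * A)ᴴ)).re = 0) ↔
        A * Q t = Q t * A) :=
  stmt6_general n A hA V Q hQidem hQherm hQrange
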